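/- arXiv:1911.03592 — 4 statements merged into one kernel-verified Lean document; each statement's English description precedes it below -/
import Mathlib

section
/- (Theorem 1, deterministic form.) Let Y ∈ ℝ^n, X ∈ ℝ^{n×p}, and β* ∈ ℝ^p with |supp(β*)| ≤ S. Assume: (i) every column X_j of X satisfies ‖X_j‖₂ ≤ √n; (ii) X satisfies the restricted eigenvalue condition with constant γ > 0 over the cone C(β*); (iii) β* is feasible for the constrained ℓ∞ problem with parameter λ₀ > 0, i.e., (1/√n)‖Y − Xβ*‖_∞ ≤ λ₀; and (iv) β̂ ∈ ℝ^p is feasible, (1/√n)‖Y − Xβ̂‖_∞ ≤ λ₀, with ‖β̂‖₁ ≤ ‖β*‖₁. Then ‖β̂ − β*‖₂ ≤ 4 λ₀ √(S n) / γ. -/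
/-!
Put `ν = β̂ − β*`. Since `‖β̂‖₁ ≤ ‖β*‖₁`, the vector `ν` lies in the cone `C(β*)`, so the
restricted eigenvalue condition applies to it, and Cauchy–Schwarz on the support gives
`‖ν‖₁ ≤ 2 √S ‖ν‖₂`. Both `β̂` and `β*` are feasible, so `‖Xν‖_∞ ≤ 2 λ₀ √n`, while the column
bound gives `‖Xν‖₁ ≤ n ‖ν‖₁`. Hence
`γ ‖ν‖₂² ≤ ‖Xν‖₂² / n ≤ ‖Xν‖_∞ ‖Xν‖₁ / n ≤ 2 λ₀ √n ‖ν‖₁ ≤ 4 λ₀ √(S n) ‖ν‖₂`,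
and dividing by `γ ‖ν‖₂` gives the bound.
-/

open Finset

/-- The maximum absolute entry of a vector in `ℝ^n`. -/
noncomputable def linftyNorm {n : ℕ} (v : Fin n → ℝ) : ℝ := ⨆ i, |v i|

/-- Membership in the cone `C(β*)`: `‖ν_{S₀ᶜ}‖₁ ≤ ‖ν_{S₀}‖₁`, `S₀ = supp(β*)`. -/
def inCone {p : ℕ} (βstar ν : Fin p → ℝ) : Prop :=
  ∑ j ∈ Finset.univ.filter (fun j => βstar j = 0), |ν j|
    ≤ ∑ j ∈ Finset.univ.filter (fun j => βstar j ≠ 0), |ν j|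

/-- Feasibility for the constrained ℓ∞ problem: `(1/√n) ‖Y − Xβ‖_∞ ≤ λ₀`. -/
noncomputable def feasible {n p : ℕ} (Y : Fin n → ℝ) (X : Matrix (Fin n) (Fin p) ℝ)
    (lam₀ : ℝ) (β : Fin p → ℝ) : Prop :=
  (1 / Real.sqrt n) * linftyNorm (fun i => Y i - X.mulVec β i) ≤ lam₀

open Matrix

lemma sum_abs_le_sqrt_card_mul_sqrt_sum_sq {ι : Type*} (s : Finset ι) (f : ι → ℝ) :
    ∑ i ∈ s, |f i| ≤ √(#s : ℝ) * √(∑ i ∈ s, f i ^ 2) := by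
  rw [← Real.sqrt_mul (Nat.cast_nonneg _)]
  apply Real.le_sqrt_of_sq_le
  simpa only [sq_abs] using sq_sum_le_card_mul_sum_sq (s := s) (f := fun i => |f i|)

lemma sum_abs_le_of_sqrt_sum_sq_le_sqrt {n : ℕ} {v : Fin n → ℝ} (hv : √(∑ i, v i ^ 2) ≤ √n) :
    ∑ i, |v i| ≤ n :=
  calc ∑ i, |v i| ≤ √(#(univ : Finset (Fin n)) : ℝ) * √(∑ i, v i ^ 2) :=
        sum_abs_le_sqrt_card_mul_sqrt_sum_sq _ _
    _ ≤ √n * √n := by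
        rw [card_univ, Fintype.card_fin]
        exact mul_le_mul_of_nonneg_left hv (Real.sqrt_nonneg _)
    _ = n := Real.mul_self_sqrt (Nat.cast_nonneg n)

lemma sum_sq_le_mul_sum_abs {ι : Type*} {s : Finset ι} {v : ι → ℝ} {M : ℝ}
    (hv : ∀ i ∈ s, |v i| ≤ M) : ∑ i ∈ s, v i ^ 2 ≤ M * ∑ i ∈ s, |v i| := by
  rw [mul_sum]
  refine sum_le_sum fun i hi => ?_
  rw [← sq_abs, sq]
  exact mul_le_mul_of_nonneg_right (hv i hi) (abs_nonneg _)

lemma sum_abs_mulVec_le {m k : Type*} [Fintype m] [Fintype k] (X : Matrix m k ℝ) (ν : k → ℝ)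
    {c : ℝ} (hc : ∀ j, ∑ i, |X i j| ≤ c) : ∑ i, |(X *ᵥ ν) i| ≤ c * ∑ j, |ν j| :=
  calc ∑ i, |(X *ᵥ ν) i| ≤ ∑ i, ∑ j, |X i j| * |ν j| :=
        sum_le_sum fun i _ => (abs_sum_le_sum_abs _ _).trans_eq (by simp only [abs_mul])
    _ = ∑ j, (∑ i, |X i j|) * |ν j| := by rw [sum_comm]; simp only [sum_mul]
    _ ≤ ∑ j, c * |ν j| := sum_le_sum fun j _ => mul_le_mul_of_nonneg_right (hc j) (abs_nonneg _)
    _ = c * ∑ j, |ν j| := (mul_sum _ _ _).symm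

lemma le_div_of_mul_sq_le_mul {r γ c : ℝ} (hr : 0 ≤ r) (hγ : 0 < γ) (hc : 0 ≤ c)
    (h : γ * r ^ 2 ≤ c * r) : r ≤ c / γ := by
  rw [le_div_iff₀ hγ]
  rcases hr.eq_or_lt with rfl | hr
  · simpa using hc
  · exact le_of_mul_le_mul_right (by nlinarith) hr

lemma abs_residual_le_of_feasible {n p : ℕ} (hn : 0 < n) {Y : Fin n → ℝ}
    {X : Matrix (Fin n) (Fin p) ℝ} {lam₀ : ℝ} {β : Fin p → ℝ}
    (h : feasible Y X lam₀ β) (i : Fin n) : |Y i - (X *ᵥ β) i| ≤ lam₀ * √n := by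
  have hsqrt : 0 < √(n : ℝ) := Real.sqrt_pos.mpr (by exact_mod_cast hn)
  have hi : |Y i - (X *ᵥ β) i| ≤ linftyNorm (fun i => Y i - (X *ᵥ β) i) :=
    le_ciSup (f := fun i => |Y i - (X *ᵥ β) i|) (Finite.bddAbove_range _) i
  rw [feasible, one_div, inv_mul_le_iff₀ hsqrt] at h
  linarith

lemma abs_mulVec_sub_le_of_feasible {n p : ℕ} (hn : 0 < n) {Y : Fin n → ℝ}
    {X : Matrix (Fin n) (Fin p) ℝ} {lam₀ : ℝ} {β₁ β₂ : Fin p → ℝ}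
    (h₁ : feasible Y X lam₀ β₁) (h₂ : feasible Y X lam₀ β₂) (i : Fin n) :
    |(X *ᵥ (β₁ - β₂)) i| ≤ 2 * lam₀ * √n := by
  have hdiff : (X *ᵥ (β₁ - β₂)) i = (Y i - (X *ᵥ β₂) i) - (Y i - (X *ᵥ β₁) i) := by
    rw [mulVec_sub, Pi.sub_apply]; ring
  rw [hdiff]
  linarith [abs_sub (Y i - (X *ᵥ β₂) i) (Y i - (X *ᵥ β₁) i),
    abs_residual_le_of_feasible hn h₁ i, abs_residual_le_of_feasible hn h₂ i]

lemma inCone_sub_of_sum_abs_le {p : ℕ} {βstar β : Fin p → ℝ}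
    (h : ∑ j, |β j| ≤ ∑ j, |βstar j|) : inCone βstar (β - βstar) := by
  have split : ∀ f : Fin p → ℝ, ∑ j ∈ univ.filter (fun j => βstar j = 0), f j
      + ∑ j ∈ univ.filter (fun j => βstar j ≠ 0), f j = ∑ j, f j :=
    fun f => sum_filter_add_sum_filter_not _ _ _
  have hoff : ∑ j ∈ univ.filter (fun j => βstar j = 0), |(β - βstar) j|
      = ∑ j ∈ univ.filter (fun j => βstar j = 0), |β j| :=
    sum_congr rfl fun j hj => by simp [(mem_filter.mp hj).2]
  have hon : ∑ j ∈ univ.filter (fun j => βstar j ≠ 0), (|βstar j| - |β j|)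
      ≤ ∑ j ∈ univ.filter (fun j => βstar j ≠ 0), |(β - βstar) j| :=
    sum_le_sum fun j _ => by
      rw [Pi.sub_apply, abs_sub_comm]; exact abs_sub_abs_le_abs_sub _ _
  rw [sum_sub_distrib] at hon
  have hstar : ∑ j ∈ univ.filter (fun j => βstar j = 0), |βstar j| = 0 :=
    sum_eq_zero fun j hj => by simp [(mem_filter.mp hj).2]
  rw [inCone, hoff]
  linarith [split (fun j => |β j|), split (fun j => |βstar j|)]

lemma sum_abs_le_of_inCone {p : ℕ} {βstar ν : Fin p → ℝ} (h : inCone βstar ν) :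
    ∑ j, |ν j| ≤ 2 * √(#(univ.filter (fun j => βstar j ≠ 0)) : ℝ) * √(∑ j, ν j ^ 2) := by
  set S₀ := univ.filter (fun j => βstar j ≠ 0)
  have split : ∑ j ∈ univ.filter (fun j => βstar j = 0), |ν j| + ∑ j ∈ S₀, |ν j|
      = ∑ j, |ν j| := sum_filter_add_sum_filter_not _ _ _
  have hS₀ : ∑ j ∈ S₀, |ν j| ≤ √(#S₀ : ℝ) * √(∑ j, ν j ^ 2) :=
    (sum_abs_le_sqrt_card_mul_sqrt_sum_sq S₀ ν).trans <| by
      gcongr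
      exact subset_univ _
  rw [inCone] at h
  linarith

theorem estimation_error_det_general {n p : ℕ} (hn : 0 < n)
    (Y : Fin n → ℝ) (X : Matrix (Fin n) (Fin p) ℝ)
    (βstar βhat : Fin p → ℝ) (S : ℕ)
    (hsparse : (Finset.univ.filter (fun j => βstar j ≠ 0)).card ≤ S)
    (hcol : ∀ j, Real.sqrt (∑ i, (X i j) ^ 2) ≤ Real.sqrt n)
    (γ : ℝ) (hγ : 0 < γ)
    (hRE : ∀ ν : Fin p → ℝ, inCone βstar ν →
      γ * ∑ j, (ν j) ^ 2 ≤ (1 / (n : ℝ)) * ∑ i, (X.mulVec ν i) ^ 2)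
    (lam₀ : ℝ) (hlam₀ : 0 < lam₀)
    (hfeasStar : feasible Y X lam₀ βstar)
    (hfeasHat : feasible Y X lam₀ βhat)
    (hl1 : ∑ j, |βhat j| ≤ ∑ j, |βstar j|) :
    Real.sqrt (∑ j, (βhat j - βstar j) ^ 2) ≤ 4 * lam₀ * Real.sqrt (S * n) / γ := by
  set ν := βhat - βstar
  have hcone : inCone βstar ν := inCone_sub_of_sum_abs_le hl1
  have key : γ * √(∑ j, ν j ^ 2) ^ 2 ≤ 4 * lam₀ * √((S : ℝ) * n) * √(∑ j, ν j ^ 2) :=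
    calc γ * √(∑ j, ν j ^ 2) ^ 2 = γ * ∑ j, ν j ^ 2 := by
          rw [Real.sq_sqrt (sum_nonneg fun j _ => sq_nonneg _)]
      _ ≤ (1 / n) * ∑ i, (X *ᵥ ν) i ^ 2 := hRE ν hcone
      _ ≤ (1 / n) * (2 * lam₀ * √n * ∑ i, |(X *ᵥ ν) i|) := by
          gcongr
          exact sum_sq_le_mul_sum_abs fun i _ =>
            abs_mulVec_sub_le_of_feasible hn hfeasHat hfeasStar i
      _ ≤ (1 / n) * (2 * lam₀ * √n * (n * ∑ j, |ν j|)) := by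
          gcongr
          exact sum_abs_mulVec_le X ν fun j => sum_abs_le_of_sqrt_sum_sq_le_sqrt (hcol j)
      _ = 2 * lam₀ * √n * ∑ j, |ν j| := by field_simp
      _ ≤ 2 * lam₀ * √n * (2 * √(S : ℝ) * √(∑ j, ν j ^ 2)) := by
          gcongr
          refine (sum_abs_le_of_inCone hcone).trans ?_
          gcongr
      _ = 4 * lam₀ * √((S : ℝ) * n) * √(∑ j, ν j ^ 2) := by
          rw [Real.sqrt_mul (Nat.cast_nonneg _)]; ring
  exact le_div_of_mul_sq_le_mul (Real.sqrt_nonneg _) hγ (by positivity) key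

/-- Theorem 1, deterministic form: estimation error bound
`‖β̂ − β*‖₂ ≤ 4 λ₀ √(S n) / γ`. -/
theorem estimation_error_det {n p : ℕ} (hn : 0 < n) (hp : 0 < p)
    (Y : Fin n → ℝ) (X : Matrix (Fin n) (Fin p) ℝ)
    (βstar βhat : Fin p → ℝ) (S : ℕ) (hS : 0 < S)
    (hsparse : (Finset.univ.filter (fun j => βstar j ≠ 0)).card ≤ S)
    (hcol : ∀ j, Real.sqrt (∑ i, (X i j) ^ 2) ≤ Real.sqrt n)
    (γ : ℝ) (hγ : 0 < γ)
    (hRE : ∀ ν : Fin p → ℝ, inCone βstar ν →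
      γ * ∑ j, (ν j) ^ 2 ≤ (1 / (n : ℝ)) * ∑ i, (X.mulVec ν i) ^ 2)
    (lam₀ : ℝ) (hlam₀ : 0 < lam₀)
    (hfeasStar : feasible Y X lam₀ βstar)
    (hfeasHat : feasible Y X lam₀ βhat)
    (hl1 : ∑ j, |βhat j| ≤ ∑ j, |βstar j|) :
    Real.sqrt (∑ j, (βhat j - βstar j) ^ 2) ≤ 4 * lam₀ * Real.sqrt (S * n) / γ :=
  estimation_error_det_general hn Y X βstar βhat S hsparse hcol γ hγ hRE lam₀ hlam₀ hfeasStar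
    hfeasHat hl1
end

section
/- (Theorem 2, deterministic form.) Let Y ∈ ℝ^n, X ∈ ℝ^{n×p}, and β* ∈ ℝ^p with |supp(β*)| ≤ S. Assume: (i) the maximum absolute column sum satisfies ‖X‖₁ ≤ C √n for some constant C > 0; (ii) X satisfies the restricted eigenvalue condition with constant γ > 0 over the cone C(β*); (iii) β* is feasible for the constrained ℓ∞ problem with parameter λ₀ > 0, i.e., (1/√n)‖Y − Xβ*‖_∞ ≤ λ₀; and (iv) β̂ ∈ ℝ^p is feasible with ‖β̂‖₁ ≤ ‖β*‖₁. Then ‖β̂ − β*‖₂ ≤ 4 C λ₀ √S / γ. -/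
open Finset

/-- The maximum absolute column sum of a matrix `X ∈ ℝ^{n×p}`. -/
noncomputable def colSumNorm {n p : ℕ} (X : Matrix (Fin n) (Fin p) ℝ) : ℝ :=
  ⨆ j, ∑ i, |X i j|

/-- Theorem 2, deterministic form: under the max column sum condition
`‖X‖₁ ≤ C√n`, the estimation error satisfies `‖β̂ − β*‖₂ ≤ 4 C λ₀ √S / γ`. -/
theorem estimation_error_det_colsum {n p : ℕ} (hn : 0 < n) (hp : 0 < p)
    (Y : Fin n → ℝ) (X : Matrix (Fin n) (Fin p) ℝ)
    (βstar βhat : Fin p → ℝ) (S : ℕ) (hS : 0 < S)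
    (hsparse : (Finset.univ.filter (fun j => βstar j ≠ 0)).card ≤ S)
    (C : ℝ) (hC : 0 < C)
    (hcolsum : colSumNorm X ≤ C * Real.sqrt n)
    (γ : ℝ) (hγ : 0 < γ)
    (hRE : ∀ ν : Fin p → ℝ, inCone βstar ν →
      γ * ∑ j, (ν j) ^ 2 ≤ (1 / (n : ℝ)) * ∑ i, (X.mulVec ν i) ^ 2)
    (lam₀ : ℝ) (hlam₀ : 0 < lam₀)
    (hfeasStar : feasible Y X lam₀ βstar)
    (hfeasHat : feasible Y X lam₀ βhat)
    (hl1 : ∑ j, |βhat j| ≤ ∑ j, |βstar j|) :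
    Real.sqrt (∑ j, (βhat j - βstar j) ^ 2) ≤ 4 * C * lam₀ * Real.sqrt S / γ := by
  set ν : Fin p → ℝ := fun j => βhat j - βstar j with hνdef
  set a : ℝ := Real.sqrt (∑ j, (ν j) ^ 2) with hadef
  have hsn : (0:ℝ) < Real.sqrt n := Real.sqrt_pos.2 (by exact_mod_cast hn)
  -- infinity norm bounds
  have hinf : ∀ β : Fin p → ℝ, feasible Y X lam₀ β →
      ∀ i, |Y i - X.mulVec β i| ≤ lam₀ * Real.sqrt n := by
    intro β hf i
    have hle : |Y i - X.mulVec β i| ≤ linftyNorm (fun i => Y i - X.mulVec β i) := by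
      unfold linftyNorm
      exact le_ciSup (f := fun i => |Y i - X.mulVec β i|)
        (Set.Finite.bddAbove (Set.finite_range _)) i
    have hL : linftyNorm (fun i => Y i - X.mulVec β i) ≤ lam₀ * Real.sqrt n := by
      unfold feasible at hf
      rw [one_div, inv_mul_le_iff₀ hsn, mul_comm] at hf
      exact hf
    exact hle.trans hL
  -- cone membership
  have hcone : inCone βstar ν := by
    unfold inCone
    have hfilter : Finset.univ.filter (fun j => βstar j = 0)
        = Finset.univ.filter (fun j => ¬ βstar j ≠ 0) := by
      apply Finset.filter_congr; intro j _; simp [not_not]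
    have hsplit : ∀ f : Fin p → ℝ, ∑ j, f j
        = ∑ j ∈ Finset.univ.filter (fun j => βstar j ≠ 0), f j
          + ∑ j ∈ Finset.univ.filter (fun j => βstar j = 0), f j := by
      intro f
      rw [hfilter, Finset.sum_filter_add_sum_filter_not]
    have h0 : ∀ j ∈ Finset.univ.filter (fun j => βstar j = 0), |ν j| = |βhat j| := by
      intro j hj
      simp only [Finset.mem_filter] at hj
      simp [hνdef, hj.2]
    have h0' : ∀ j ∈ Finset.univ.filter (fun j => βstar j = 0), |βstar j| = 0 := by
      intro j hj
      simp only [Finset.mem_filter] at hj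
      simp [hj.2]
    rw [Finset.sum_congr rfl h0]
    rw [hsplit (fun j => |βhat j|), hsplit (fun j => |βstar j|),
      Finset.sum_congr rfl h0', Finset.sum_const_zero, add_zero] at hl1
    have hterm : ∀ j ∈ Finset.univ.filter (fun j => βstar j ≠ 0),
        |βstar j| - |βhat j| ≤ |ν j| := by
      intro j _
      have := abs_sub_abs_le_abs_sub (βstar j) (βhat j)
      have h2 : |βstar j - βhat j| = |ν j| := by rw [hνdef]; exact (abs_sub_comm _ _).symm
      linarith
    have := Finset.sum_le_sum hterm
    rw [Finset.sum_sub_distrib] at this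
    linarith
  -- l1 norm bound via Cauchy-Schwarz and cone
  have hanonneg : (0:ℝ) ≤ a := Real.sqrt_nonneg _
  have hsum_sq : ∑ j, (ν j)^2 = a^2 := by
    rw [hadef, Real.sq_sqrt (Finset.sum_nonneg fun j _ => sq_nonneg _)]
  have hCS : ∑ j ∈ Finset.univ.filter (fun j => βstar j ≠ 0), |ν j|
      ≤ Real.sqrt S * a := by
    have h1 : (∑ j ∈ Finset.univ.filter (fun j => βstar j ≠ 0), |ν j|)^2
        ≤ (S : ℝ) * ∑ j, (ν j)^2 := by
      have := Finset.sum_mul_sq_le_sq_mul_sq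
        (Finset.univ.filter (fun j => βstar j ≠ 0)) (fun _ => (1:ℝ)) (fun j => |ν j|)
      simp only [one_mul, one_pow] at this
      have hcard : ∑ _j ∈ Finset.univ.filter (fun j => βstar j ≠ 0), (1:ℝ)
          = ((Finset.univ.filter (fun j => βstar j ≠ 0)).card : ℝ) := by simp
      have hsub : ∑ j ∈ Finset.univ.filter (fun j => βstar j ≠ 0), |ν j|^2
          ≤ ∑ j, (ν j)^2 := by
        calc ∑ j ∈ Finset.univ.filter (fun j => βstar j ≠ 0), |ν j|^2
            = ∑ j ∈ Finset.univ.filter (fun j => βstar j ≠ 0), (ν j)^2 := by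
              apply Finset.sum_congr rfl; intro j _; rw [sq_abs]
          _ ≤ ∑ j, (ν j)^2 :=
              Finset.sum_le_sum_of_subset_of_nonneg (Finset.filter_subset _ _)
                (fun j _ _ => sq_nonneg _)
      calc (∑ j ∈ Finset.univ.filter (fun j => βstar j ≠ 0), |ν j|)^2
          ≤ ((Finset.univ.filter (fun j => βstar j ≠ 0)).card : ℝ)
            * ∑ j ∈ Finset.univ.filter (fun j => βstar j ≠ 0), |ν j|^2 := by
            rw [← hcard]; exact this
        _ ≤ (S : ℝ) * ∑ j, (ν j)^2 := by
            apply mul_le_mul (by exact_mod_cast hsparse) hsub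
              (Finset.sum_nonneg fun j _ => sq_nonneg _) (Nat.cast_nonneg _)
    have h2 : Real.sqrt S * a = Real.sqrt ((S : ℝ) * ∑ j, (ν j)^2) := by
      rw [Real.sqrt_mul (Nat.cast_nonneg _), hadef]
    rw [h2]
    exact (Real.le_sqrt (Finset.sum_nonneg fun j _ => abs_nonneg _) (by positivity)).mpr h1
  have hl1ν : ∑ j, |ν j| ≤ 2 * Real.sqrt S * a := by
    have hfilter : Finset.univ.filter (fun j => βstar j = 0)
        = Finset.univ.filter (fun j => ¬ βstar j ≠ 0) := by
      apply Finset.filter_congr; intro j _; simp [not_not]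
    have hsplit : ∑ j, |ν j|
        = ∑ j ∈ Finset.univ.filter (fun j => βstar j ≠ 0), |ν j|
          + ∑ j ∈ Finset.univ.filter (fun j => βstar j = 0), |ν j| := by
      rw [hfilter, Finset.sum_filter_add_sum_filter_not]
    unfold inCone at hcone
    rw [hsplit]; linarith
  -- column sum bound
  have hcol : ∀ j, ∑ i, |X i j| ≤ C * Real.sqrt n := by
    intro j
    have : ∑ i, |X i j| ≤ colSumNorm X := by
      unfold colSumNorm
      exact le_ciSup (f := fun j => ∑ i, |X i j|)
        (Set.Finite.bddAbove (Set.finite_range _)) j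
    exact this.trans hcolsum
  -- |Xν i| ≤ 2 λ₀ √n
  have hXν : ∀ i, |X.mulVec ν i| ≤ 2 * lam₀ * Real.sqrt n := by
    intro i
    have hlin : X.mulVec ν i = (Y i - X.mulVec βstar i) - (Y i - X.mulVec βhat i) := by
      have : X.mulVec ν = X.mulVec βhat - X.mulVec βstar := by
        rw [hνdef]
        have : (fun j => βhat j - βstar j) = βhat - βstar := rfl
        rw [this, Matrix.mulVec_sub]
      rw [this]; simp only [Pi.sub_apply]; ring
    rw [hlin]
    calc |(Y i - X.mulVec βstar i) - (Y i - X.mulVec βhat i)|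
        ≤ |Y i - X.mulVec βstar i| + |Y i - X.mulVec βhat i| := abs_sub _ _
      _ ≤ lam₀ * Real.sqrt n + lam₀ * Real.sqrt n :=
          add_le_add (hinf βstar hfeasStar i) (hinf βhat hfeasHat i)
      _ = 2 * lam₀ * Real.sqrt n := by ring
  -- ℓ1 of Xν
  have hXν1 : ∑ i, |X.mulVec ν i| ≤ C * Real.sqrt n * ∑ j, |ν j| := by
    calc ∑ i, |X.mulVec ν i| ≤ ∑ i, ∑ j, |X i j| * |ν j| := by
          apply Finset.sum_le_sum; intro i _
          unfold Matrix.mulVec dotProduct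
          calc |∑ j, X i j * ν j| ≤ ∑ j, |X i j * ν j| := Finset.abs_sum_le_sum_abs _ _
            _ = ∑ j, |X i j| * |ν j| := by apply Finset.sum_congr rfl; intro j _; rw [abs_mul]
      _ = ∑ j, (∑ i, |X i j|) * |ν j| := by
          rw [Finset.sum_comm]
          apply Finset.sum_congr rfl; intro j _; rw [Finset.sum_mul]
      _ ≤ ∑ j, (C * Real.sqrt n) * |ν j| := by
          apply Finset.sum_le_sum; intro j _
          exact mul_le_mul_of_nonneg_right (hcol j) (abs_nonneg _)
      _ = C * Real.sqrt n * ∑ j, |ν j| := by rw [← Finset.mul_sum]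
  -- ℓ2 of Xν squared
  have hXν2 : ∑ i, (X.mulVec ν i)^2 ≤ (2 * lam₀ * Real.sqrt n) * ∑ i, |X.mulVec ν i| := by
    rw [Finset.mul_sum]
    apply Finset.sum_le_sum; intro i _
    rw [← sq_abs]
    have := hXν i
    nlinarith [abs_nonneg (X.mulVec ν i)]
  -- combine
  have hnpos : (0:ℝ) < n := by exact_mod_cast hn
  have hsqn : Real.sqrt n * Real.sqrt n = n := Real.mul_self_sqrt (le_of_lt hnpos)
  have hmain : γ * a^2 ≤ 4 * C * lam₀ * Real.sqrt S * a := by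
    have hre := hRE ν hcone
    rw [hsum_sq] at hre
    have hchain : (1 / (n:ℝ)) * ∑ i, (X.mulVec ν i)^2 ≤ 2 * C * lam₀ * ∑ j, |ν j| := by
      have h1 : ∑ i, (X.mulVec ν i)^2
          ≤ (2 * lam₀ * Real.sqrt n) * (C * Real.sqrt n * ∑ j, |ν j|) := by
        refine hXν2.trans ?_
        apply mul_le_mul_of_nonneg_left hXν1 (by positivity)
      have h2 : (2 * lam₀ * Real.sqrt n) * (C * Real.sqrt n * ∑ j, |ν j|)
          = 2 * C * lam₀ * (n:ℝ) * ∑ j, |ν j| := by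
        rw [show (2 * lam₀ * Real.sqrt n) * (C * Real.sqrt n * ∑ j, |ν j|)
            = 2 * C * lam₀ * (Real.sqrt n * Real.sqrt n) * ∑ j, |ν j| by ring, hsqn]
      rw [div_mul_eq_mul_div, one_mul, div_le_iff₀ hnpos]
      calc ∑ i, (X.mulVec ν i)^2 ≤ 2 * C * lam₀ * (n:ℝ) * ∑ j, |ν j| := h1.trans_eq h2
        _ = 2 * C * lam₀ * (∑ j, |ν j|) * n := mul_right_comm _ _ _
    have h3 : 2 * C * lam₀ * ∑ j, |ν j| ≤ 2 * C * lam₀ * (2 * Real.sqrt S * a) :=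
      mul_le_mul_of_nonneg_left hl1ν (by positivity)
    calc γ * a^2 ≤ (1 / (n:ℝ)) * ∑ i, (X.mulVec ν i)^2 := hre
      _ ≤ 2 * C * lam₀ * ∑ j, |ν j| := hchain
      _ ≤ 2 * C * lam₀ * (2 * Real.sqrt S * a) := h3
      _ = 4 * C * lam₀ * Real.sqrt S * a := by ring
  -- finish
  rcases eq_or_lt_of_le hanonneg with h0 | hpos
  · rw [← h0]
    positivity
  · have h4 : γ * a ≤ 4 * C * lam₀ * Real.sqrt S := by nlinarith
    have h5 : a ≤ 4 * C * lam₀ * Real.sqrt S / γ := by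
      rw [le_div_iff₀ hγ]; linarith
    exact h5
end

section
/- (Theorem 3, deterministic form.) Under the hypotheses of the deterministic Theorem 2 — namely ‖X‖₁ ≤ C √n, the restricted eigenvalue condition with constant γ > 0 over the cone C(β*), |supp(β*)| ≤ S, β* feasible with (1/√n)‖Y − Xβ*‖_∞ ≤ λ₀, and β̂ feasible with ‖β̂‖₁ ≤ ‖β*‖₁ — the prediction error satisfies (1/√n) ‖X(β̂ − β*)‖₂ ≤ 4 C λ₀ √(S / γ). -/
open Finset

/-- Theorem 3, deterministic form: under the hypotheses of the
deterministic Theorem 2, the prediction error satisfies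
`(1/√n) ‖X(β̂ − β*)‖₂ ≤ 4 C λ₀ √(S/γ)`. -/
theorem prediction_error_det {n p : ℕ} (hn : 0 < n) (hp : 0 < p)
    (Y : Fin n → ℝ) (X : Matrix (Fin n) (Fin p) ℝ)
    (βstar βhat : Fin p → ℝ) (S : ℕ) (hS : 0 < S)
    (hsparse : (Finset.univ.filter (fun j => βstar j ≠ 0)).card ≤ S)
    (C : ℝ) (hC : 0 < C)
    (hcolsum : colSumNorm X ≤ C * Real.sqrt n)
    (γ : ℝ) (hγ : 0 < γ)
    (hRE : ∀ ν : Fin p → ℝ, inCone βstar ν →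
      γ * ∑ j, (ν j) ^ 2 ≤ (1 / (n : ℝ)) * ∑ i, (X.mulVec ν i) ^ 2)
    (lam₀ : ℝ) (hlam₀ : 0 < lam₀)
    (hfeasStar : feasible Y X lam₀ βstar)
    (hfeasHat : feasible Y X lam₀ βhat)
    (hl1 : ∑ j, |βhat j| ≤ ∑ j, |βstar j|) :
    (1 / Real.sqrt n) * Real.sqrt (∑ i, (X.mulVec (fun j => βhat j - βstar j) i) ^ 2)
      ≤ 4 * C * lam₀ * Real.sqrt (S / γ) := by
  set ν : Fin p → ℝ := fun j => βhat j - βstar j with hνdef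
  have hnR : (0:ℝ) < n := by exact_mod_cast hn
  have hsn : (0:ℝ) < Real.sqrt n := Real.sqrt_pos.2 hnR
  have hsγ : (0:ℝ) < Real.sqrt γ := Real.sqrt_pos.2 hγ
  -- residual bounds
  have hres : ∀ β : Fin p → ℝ, feasible Y X lam₀ β →
      ∀ i, |Y i - X.mulVec β i| ≤ Real.sqrt n * lam₀ := by
    intro β hβ i
    have h1 : linftyNorm (fun i => Y i - X.mulVec β i) ≤ Real.sqrt n * lam₀ := by
      have h := mul_le_mul_of_nonneg_left hβ hsn.le
      calc linftyNorm (fun i => Y i - X.mulVec β i)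
          = Real.sqrt n * ((1 / Real.sqrt n) *
              linftyNorm (fun i => Y i - X.mulVec β i)) := by
            field_simp
        _ ≤ Real.sqrt n * lam₀ := h
    exact le_trans (le_ciSup (f := fun i => |Y i - X.mulVec β i|)
      (Set.Finite.bddAbove (Set.finite_range _)) i) h1
  -- Xν = residual difference
  have hXν : ∀ i, X.mulVec ν i = (Y i - X.mulVec βstar i) - (Y i - X.mulVec βhat i) := by
    intro i
    have : ν = βhat - βstar := rfl
    rw [this, Matrix.mulVec_sub]
    simp [Pi.sub_apply]
  have hXνbound : ∀ i, |X.mulVec ν i| ≤ 2 * Real.sqrt n * lam₀ := by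
    intro i
    rw [hXν i]
    calc |(Y i - X.mulVec βstar i) - (Y i - X.mulVec βhat i)|
        ≤ |Y i - X.mulVec βstar i| + |Y i - X.mulVec βhat i| := abs_sub _ _
      _ ≤ Real.sqrt n * lam₀ + Real.sqrt n * lam₀ :=
          add_le_add (hres βstar hfeasStar i) (hres βhat hfeasHat i)
      _ = 2 * Real.sqrt n * lam₀ := by ring
  -- cone membership
  set s : Finset (Fin p) := Finset.univ.filter (fun j => βstar j ≠ 0) with hsdef
  set t : Finset (Fin p) := Finset.univ.filter (fun j => βstar j = 0) with htdef
  have hsplit : ∀ f : Fin p → ℝ, ∑ j ∈ t, f j + ∑ j ∈ s, f j = ∑ j, f j := by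
    intro f
    exact Finset.sum_filter_add_sum_filter_not Finset.univ (fun j => βstar j = 0) f
  have hcone : inCone βstar ν := by
    unfold inCone
    have h1 : ∑ j ∈ t, |ν j| = ∑ j ∈ t, |βhat j| := by
      apply Finset.sum_congr rfl
      intro j hj
      have : βstar j = 0 := (Finset.mem_filter.1 hj).2
      simp [hνdef, this]
    have h2 : ∑ j ∈ t, |βstar j| = 0 := by
      apply Finset.sum_eq_zero
      intro j hj
      have : βstar j = 0 := (Finset.mem_filter.1 hj).2
      simp [this]
    have h3 : ∑ j ∈ s, (|βstar j| - |βhat j|) ≤ ∑ j ∈ s, |ν j| := by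
      apply Finset.sum_le_sum
      intro j _
      calc |βstar j| - |βhat j| ≤ |βstar j - βhat j| := abs_sub_abs_le_abs_sub _ _
        _ = |ν j| := by rw [abs_sub_comm]
    have e1 := hsplit (fun j => |βhat j|)
    have e2 := hsplit (fun j => |βstar j|)
    rw [Finset.sum_sub_distrib] at h3
    linarith
  -- column sum bound
  have hcol : ∀ j, ∑ i, |X i j| ≤ C * Real.sqrt n := by
    intro j
    exact le_trans (le_ciSup (f := fun j => ∑ i, |X i j|)
      (Set.Finite.bddAbove (Set.finite_range _)) j) hcolsum
  -- key quadratic bound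
  set Q : ℝ := ∑ i, (X.mulVec ν i) ^ 2 with hQdef
  have hQnn : 0 ≤ Q := Finset.sum_nonneg fun i _ => sq_nonneg _
  set L1 : ℝ := ∑ j, |ν j| with hL1def
  have hL1nn : 0 ≤ L1 := Finset.sum_nonneg fun j _ => abs_nonneg _
  have expand : Q = ∑ j, ν j * ∑ i, X i j * X.mulVec ν i := by
    calc Q = ∑ i, ∑ j, (X i j * ν j) * X.mulVec ν i := by
          apply Finset.sum_congr rfl
          intro i _
          rw [sq]
          conv_lhs => rw [show X.mulVec ν i = ∑ j, X i j * ν j from rfl]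
          rw [Finset.sum_mul]
          exact Finset.sum_congr rfl fun j _ => by
            rw [show X.mulVec ν i = ∑ k, X i k * ν k from rfl]
      _ = ∑ j, ∑ i, (X i j * ν j) * X.mulVec ν i := Finset.sum_comm
      _ = ∑ j, ν j * ∑ i, X i j * X.mulVec ν i := by
          apply Finset.sum_congr rfl
          intro j _
          rw [Finset.mul_sum]
          exact Finset.sum_congr rfl fun i _ => by ring
  have hQle : Q ≤ (C * Real.sqrt n) * (2 * Real.sqrt n * lam₀) * L1 := by
    rw [expand, hL1def, Finset.mul_sum]
    apply Finset.sum_le_sum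
    intro j _
    have hinner : |∑ i, X i j * X.mulVec ν i| ≤ (C * Real.sqrt n) * (2 * Real.sqrt n * lam₀) := by
      calc |∑ i, X i j * X.mulVec ν i| ≤ ∑ i, |X i j * X.mulVec ν i| :=
            Finset.abs_sum_le_sum_abs _ _
        _ = ∑ i, |X i j| * |X.mulVec ν i| := by
            exact Finset.sum_congr rfl fun i _ => abs_mul _ _
        _ ≤ ∑ i, |X i j| * (2 * Real.sqrt n * lam₀) := by
            apply Finset.sum_le_sum
            intro i _
            exact mul_le_mul_of_nonneg_left (hXνbound i) (abs_nonneg _)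
        _ = (∑ i, |X i j|) * (2 * Real.sqrt n * lam₀) := by rw [Finset.sum_mul]
        _ ≤ (C * Real.sqrt n) * (2 * Real.sqrt n * lam₀) := by
            apply mul_le_mul_of_nonneg_right (hcol j)
            positivity
    calc ν j * ∑ i, X i j * X.mulVec ν i ≤ |ν j * ∑ i, X i j * X.mulVec ν i| := le_abs_self _
      _ = |ν j| * |∑ i, X i j * X.mulVec ν i| := abs_mul _ _
      _ ≤ |ν j| * ((C * Real.sqrt n) * (2 * Real.sqrt n * lam₀)) :=
          mul_le_mul_of_nonneg_left hinner (abs_nonneg _)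
      _ = (C * Real.sqrt n) * (2 * Real.sqrt n * lam₀) * |ν j| := by ring
  -- l1 vs l2
  set a : ℝ := ∑ j, (ν j) ^ 2 with hadef
  have hann : 0 ≤ a := Finset.sum_nonneg fun j _ => sq_nonneg _
  have hL1le : L1 ≤ 2 * Real.sqrt S * Real.sqrt a := by
    have hcs : (∑ j ∈ s, |ν j|) ^ 2 ≤ (s.card : ℝ) * ∑ j ∈ s, |ν j| ^ 2 := by
      exact sq_sum_le_card_mul_sum_sq
    have hsub : ∑ j ∈ s, |ν j| ^ 2 ≤ a := by
      rw [hadef]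
      have : ∀ j, |ν j| ^ 2 = (ν j) ^ 2 := fun j => sq_abs _
      simp_rw [this]
      exact Finset.sum_le_sum_of_subset_of_nonneg (Finset.subset_univ s)
        (fun j _ _ => sq_nonneg _)
    have hcard : (s.card : ℝ) ≤ (S : ℝ) := by exact_mod_cast hsparse
    have hcs2 : (∑ j ∈ s, |ν j|) ^ 2 ≤ (S : ℝ) * a := by
      calc (∑ j ∈ s, |ν j|) ^ 2 ≤ (s.card : ℝ) * ∑ j ∈ s, |ν j| ^ 2 := hcs
        _ ≤ (S : ℝ) * a := by
            apply mul_le_mul hcard hsub (Finset.sum_nonneg fun j _ => sq_nonneg _)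
              (Nat.cast_nonneg _)
    have hsnn : 0 ≤ ∑ j ∈ s, |ν j| := Finset.sum_nonneg fun j _ => abs_nonneg _
    have hsle : ∑ j ∈ s, |ν j| ≤ Real.sqrt S * Real.sqrt a := by
      rw [← Real.sqrt_mul (Nat.cast_nonneg S)]
      exact (Real.le_sqrt hsnn (by positivity)).2 hcs2
    have e1 := hsplit (fun j => |ν j|)
    have : ∑ j ∈ t, |ν j| ≤ ∑ j ∈ s, |ν j| := hcone
    rw [hL1def]
    linarith
  -- RE bound
  have hRE2 : γ * a ≤ (1/(n:ℝ)) * Q := hRE ν hcone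
  have haQ : a ≤ Q / (n * γ) := by
    rw [le_div_iff₀ (by positivity : (0:ℝ) < (n:ℝ) * γ)]
    have h2 : (n:ℝ) * (γ * a) ≤ (n:ℝ) * ((1/(n:ℝ)) * Q) :=
      mul_le_mul_of_nonneg_left hRE2 hnR.le
    have h3 : (n:ℝ) * ((1/(n:ℝ)) * Q) = Q := by field_simp
    nlinarith
  have hsa : Real.sqrt a ≤ Real.sqrt Q / (Real.sqrt n * Real.sqrt γ) := by
    calc Real.sqrt a ≤ Real.sqrt (Q / (n * γ)) := Real.sqrt_le_sqrt haQ
      _ = Real.sqrt Q / (Real.sqrt n * Real.sqrt γ) := by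
          rw [Real.sqrt_div hQnn, Real.sqrt_mul hnR.le]
  -- combine
  set q : ℝ := Real.sqrt Q with hqdef
  have hqnn : 0 ≤ q := Real.sqrt_nonneg _
  have hq2 : q ^ 2 = Q := Real.sq_sqrt hQnn
  have hK : Q ≤ (4 * C * lam₀ * Real.sqrt ((S:ℝ) / γ) * Real.sqrt n) * q := by
    have step : Q ≤ (C * Real.sqrt n) * (2 * Real.sqrt n * lam₀) *
        (2 * Real.sqrt S * (q / (Real.sqrt n * Real.sqrt γ))) := by
      calc Q ≤ (C * Real.sqrt n) * (2 * Real.sqrt n * lam₀) * L1 := hQle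
        _ ≤ _ := by
            apply mul_le_mul_of_nonneg_left _ (by positivity)
            calc L1 ≤ 2 * Real.sqrt S * Real.sqrt a := hL1le
              _ ≤ 2 * Real.sqrt S * (q / (Real.sqrt n * Real.sqrt γ)) := by
                  apply mul_le_mul_of_nonneg_left hsa (by positivity)
    have heq : (C * Real.sqrt n) * (2 * Real.sqrt n * lam₀) *
        (2 * Real.sqrt S * (q / (Real.sqrt n * Real.sqrt γ)))
        = (4 * C * lam₀ * Real.sqrt ((S:ℝ) / γ) * Real.sqrt n) * q := by
      rw [Real.sqrt_div (Nat.cast_nonneg S)]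
      field_simp
      ring
    linarith [step, heq ▸ step]
  have hqle : q ≤ 4 * C * lam₀ * Real.sqrt ((S:ℝ) / γ) * Real.sqrt n := by
    by_contra hcon
    push_neg at hcon
    have hKnn : 0 ≤ 4 * C * lam₀ * Real.sqrt ((S:ℝ) / γ) * Real.sqrt n := by positivity
    have hqpos : 0 < q := lt_of_le_of_lt hKnn hcon
    nlinarith [hq2, hK]
  show (1 / Real.sqrt n) * q ≤ 4 * C * lam₀ * Real.sqrt ((S:ℝ) / γ)
  rw [div_mul_eq_mul_div, one_mul, div_le_iff₀ hsn]
  linarith [hqle]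
end

section
/- (Proposition 1.) Let Y ∈ ℝ^n and X ∈ ℝ^{n×p}, and let ‖X‖_max = max_{i,j} |X_{ij}| denote the entrywise maximum absolute value of X. If the tuning parameter λ satisfies λ > ‖X‖_max, then β = 0 is the unique global minimizer over ℝ^p of the penalized objective f(β) = ‖Y − Xβ‖_∞ + λ ‖β‖₁. -/
open Finset

/-- The entrywise max norm of a matrix `X ∈ ℝ^{n×p}`. -/
noncomputable def maxNorm {n p : ℕ} (X : Matrix (Fin n) (Fin p) ℝ) : ℝ :=
  ⨆ i, ⨆ j, |X i j|

lemma abs_entry_le_maxNorm {n p : ℕ} (X : Matrix (Fin n) (Fin p) ℝ)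
    (i : Fin n) (j : Fin p) : |X i j| ≤ maxNorm X := by
  have h1 : |X i j| ≤ ⨆ j, |X i j| :=
    le_ciSup (f := fun j => |X i j|) (Set.Finite.bddAbove (Set.finite_range _)) j
  have h2 : (⨆ j, |X i j|) ≤ maxNorm X :=
    le_ciSup (f := fun i => ⨆ j, |X i j|) (Set.Finite.bddAbove (Set.finite_range _)) i
  linarith

/-- Proposition 1: if `λ > ‖X‖_max`, then `β = 0` is the unique global
minimizer of `f(β) = ‖Y − Xβ‖_∞ + λ ‖β‖₁`. -/
theorem zero_unique_global_min {n p : ℕ} (hn : 0 < n)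
    (Y : Fin n → ℝ) (X : Matrix (Fin n) (Fin p) ℝ)
    (lam : ℝ) (hlam : maxNorm X < lam) :
    ∀ β : Fin p → ℝ, β ≠ 0 →
      linftyNorm (fun i => Y i - X.mulVec (0 : Fin p → ℝ) i)
          + lam * ∑ j, |(0 : Fin p → ℝ) j|
        < linftyNorm (fun i => Y i - X.mulVec β i) + lam * ∑ j, |β j| := by
  intro β hβ
  haveI : NeZero n := ⟨hn.ne'⟩
  -- simplify the left side
  have hL : linftyNorm (fun i => Y i - X.mulVec (0 : Fin p → ℝ) i) = ⨆ i, |Y i| := by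
    simp [linftyNorm, Matrix.mulVec_zero]
  have hsum0 : (∑ j, |(0 : Fin p → ℝ) j|) = 0 := by simp
  -- β ≠ 0 gives positive ℓ1 norm
  have hpos : 0 < ∑ j, |β j| := by
    rcases Function.ne_iff.mp hβ with ⟨j0, hj0⟩
    have : 0 < |β j0| := abs_pos.mpr hj0
    have hle : |β j0| ≤ ∑ j, |β j| :=
      Finset.single_le_sum (fun j _ => abs_nonneg (β j)) (Finset.mem_univ j0)
    linarith
  -- choose i0 achieving sup |Y i|
  obtain ⟨i0, hi0⟩ := exists_eq_ciSup_of_finite (f := fun i : Fin n => |Y i|)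
  have key : |Y i0| < linftyNorm (fun i => Y i - X.mulVec β i) + lam * ∑ j, |β j| := by
    have h1 : |Y i0| ≤ |Y i0 - X.mulVec β i0| + |X.mulVec β i0| := by
      have := abs_sub_abs_le_abs_sub (Y i0) (X.mulVec β i0)
      have := abs_add_le (Y i0 - X.mulVec β i0) (X.mulVec β i0)
      simp at this ⊢
      linarith [abs_add_le (Y i0 - X.mulVec β i0) (X.mulVec β i0)]
    have h2 : |Y i0 - X.mulVec β i0| ≤ linftyNorm (fun i => Y i - X.mulVec β i) :=
      le_ciSup (f := fun i => |Y i - X.mulVec β i|) (Set.Finite.bddAbove (Set.finite_range _)) i0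
    have h3 : |X.mulVec β i0| ≤ maxNorm X * ∑ j, |β j| := by
      calc |X.mulVec β i0| ≤ ∑ j, |X i0 j * β j| := by
            simpa [Matrix.mulVec, dotProduct] using
              Finset.abs_sum_le_sum_abs (fun j => X i0 j * β j) Finset.univ
        _ ≤ ∑ j, maxNorm X * |β j| := by
            apply Finset.sum_le_sum
            intro j _
            rw [abs_mul]
            exact mul_le_mul_of_nonneg_right (abs_entry_le_maxNorm X i0 j) (abs_nonneg _)
        _ = maxNorm X * ∑ j, |β j| := by rw [Finset.mul_sum]
    have h4 : maxNorm X * ∑ j, |β j| < lam * ∑ j, |β j| :=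
      mul_lt_mul_of_pos_right hlam hpos
    linarith
  rw [hL, hsum0, ← hi0]
  linarith
end
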